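/- Let θ and λ be formal parameters and define the formal power series φ(θ; x) = ∑_{k≥1} (x^k / k!) * ∏_{a=1}^{k-1}(kθ - a). Then exp(λ·φ(θ; x)) = 1 + λ ∑_{n≥1} (x^n / n!) * ∏_{a=1}^{n-1}(λ + nθ - a) as formal power series in x with coefficients in ℚ[θ, λ]. -/

import Mathlib

open PowerSeries Finset

/-- Formal exponential of a power series (intended for series with zero constant term):
the `n`-th coefficient of `exp f` is `∑_{j≤n} coeff n (f^j) / j!`, which for
`f` with zero constant term agrees with `∑_j f^j / j!`. -/
noncomputable def expPS {R : Type*} [CommRing R] [Algebra ℚ R] (f : PowerSeries R) :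
    PowerSeries R :=
  PowerSeries.mk fun n =>
    ∑ j ∈ Finset.range (n + 1), ((1 : ℚ) / j.factorial) • (PowerSeries.coeff (R := R) n (f ^ j))

/-- The coefficient ring `ℚ[θ, λ]`: `θ = X 0`, `λ = X 1`. -/
abbrev RTL : Type := MvPolynomial (Fin 2) ℚ

/-- `φ(θ; x) = ∑_{k≥1} (x^k/k!) ∏_{a=1}^{k-1} (kθ - a)`. -/
noncomputable def phiθ : PowerSeries RTL :=
  PowerSeries.mk fun k =>
    if k = 0 then 0 else
      MvPolynomial.C ((1 : ℚ) / k.factorial) *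
        ∏ a ∈ Finset.range (k - 1),
          ((k : RTL) * MvPolynomial.X 0 - ((a : RTL) + 1))


/-!
Both sides have constant term `1` and solve `G' = G · (λφ)'`, which determines `G` over a
`ℚ`-algebra. For `exp` this is the chain rule. For the right side, write
`Aₙ(u) = u ∏_{a=1}^{n-1} (u + nθ - a)` and `Bₙ(v) = ∏_{a=1}^{n} (v + nθ - a)`, so that the right
side is `∑ Aₙ(λ) xⁿ/n!` and `(λφ)' = λ ∑ Bₙ(θ) xⁿ/n!`. Comparing coefficients of `xⁿ`, the
differential equation becomes the Rothe–Hagen identity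
`∑ᵢ (n choose i) Aᵢ(u) B_{n-i}(v) = Bₙ(u + v)` at `v = θ`. As polynomials in `u`, both sides of
that identity change under `u ↦ u + 1` by `n` times the identity for `n - 1` at `u + θ`, and they
agree at `u = 0`; a `1`-periodic polynomial over a domain of characteristic zero is constant.
-/

section Rothe

variable {R S : Type*} [CommRing R] [CommRing S]

def rotheB (t : R) (i : ℕ) (y : R) : R :=
  ∏ a ∈ range i, (y + i * t - (a + 1))

def rotheA (t : R) : ℕ → R → R
  | 0, _ => 1
  | j + 1, x => x * rotheB t j (x + t)

def rotheSum (t : R) (n : ℕ) (x y : R) : R :=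
  ∑ p ∈ antidiagonal n, (n.choose p.1 : R) * rotheA t p.1 x * rotheB t p.2 y

@[simp] lemma rotheB_zero (t y : R) : rotheB t 0 y = 1 := by simp [rotheB]

@[simp] lemma rotheA_zero (t x : R) : rotheA t 0 x = 1 := rfl

lemma rotheA_succ (t x : R) (j : ℕ) : rotheA t (j + 1) x = x * rotheB t j (x + t) := rfl

lemma map_rotheB (f : R →+* S) (t : R) (i : ℕ) (y : R) :
    f (rotheB t i y) = rotheB (f t) i (f y) := by
  simp [rotheB, map_prod]

lemma map_rotheA (f : R →+* S) (t : R) (j : ℕ) (x : R) :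
    f (rotheA t j x) = rotheA (f t) j (f x) := by
  cases j <;> simp [rotheA_succ, map_rotheB]

lemma map_rotheSum (f : R →+* S) (t : R) (n : ℕ) (x y : R) :
    f (rotheSum t n x y) = rotheSum (f t) n (f x) (f y) := by
  simp [rotheSum, map_rotheA, map_rotheB]

lemma rotheB_succ (t y : R) (i : ℕ) :
    rotheB t (i + 1) y = rotheB t i (y + t) * (y + (i + 1) * t - (i + 1)) := by
  rw [rotheB, prod_range_succ, rotheB]
  push_cast
  congr 1
  exact prod_congr rfl fun a _ => by ring

lemma rotheB_succ_add_one (t y : R) (i : ℕ) :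
    rotheB t (i + 1) (y + 1) = (y + (i + 1) * t) * rotheB t i (y + t) := by
  rw [rotheB, prod_range_succ', rotheB, mul_comm]
  push_cast
  congr 1
  · ring
  · exact prod_congr rfl fun a _ => by ring

lemma rotheB_add_one (t y : R) (i : ℕ) :
    rotheB t (i + 1) (y + 1) = rotheB t (i + 1) y + (i + 1) * rotheB t i (y + t) := by
  rw [rotheB_succ_add_one, rotheB_succ]
  ring

lemma rotheA_add_one (t x : R) (j : ℕ) :
    rotheA t (j + 1) (x + 1) = rotheA t (j + 1) x + (j + 1) * rotheA t j (x + t) := by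
  cases j with
  | zero => simp [rotheA_succ]
  | succ j =>
    rw [rotheA_succ, rotheA_succ, rotheA_succ, add_right_comm, rotheB_succ_add_one,
      rotheB_succ (y := x + t)]
    push_cast
    ring

lemma rotheSum_zero_left (t y : R) (n : ℕ) : rotheSum t n 0 y = rotheB t n y := by
  cases n with
  | zero => simp [rotheSum]
  | succ n => simp [rotheSum, Nat.sum_antidiagonal_succ, rotheA_succ]

lemma rotheSum_add_one (t x y : R) (n : ℕ) :
    rotheSum t (n + 1) (x + 1) y = rotheSum t (n + 1) x y + (n + 1) * rotheSum t n (x + t) y := by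
  have split_first (z : R) : rotheSum t (n + 1) z y = rotheB t (n + 1) y +
      ∑ p ∈ antidiagonal n,
        ((n + 1).choose (p.1 + 1) : R) * rotheA t (p.1 + 1) z * rotheB t p.2 y := by
    simp [rotheSum, Nat.sum_antidiagonal_succ]
  rw [split_first, split_first, rotheSum, mul_sum, add_assoc, ← sum_add_distrib]
  congr 1
  refine sum_congr rfl fun p _ => ?_
  have h := congrArg (Nat.cast : ℕ → R) (Nat.add_one_mul_choose_eq n p.1)
  push_cast at h
  rw [rotheA_add_one]
  linear_combination -(rotheA t p.1 (x + t) * rotheB t p.2 y) * h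

end Rothe

namespace Polynomial

variable {R : Type*} [CommRing R] [IsDomain R] [CharZero R]

theorem eq_zero_of_comp_X_add_one_eq_self {p : R[X]} (hp : p.comp (X + 1) = p)
    (h0 : p.eval 0 = 0) : p = 0 := by
  have eval_natCast (n : ℕ) : p.eval (n : R) = 0 := by
    induction n with
    | zero => simpa using h0
    | succ n ih => simpa [eval_comp, ih] using congrArg (eval (n : R)) hp
  exact eq_zero_of_infinite_isRoot p <|
    Set.infinite_of_injective_forall_mem Nat.cast_injective eval_natCast

end Polynomial

section RotheIdentity

local notation "X" => Polynomial.X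
local notation "C" => Polynomial.C

open Polynomial (compRingHom coe_compRingHom_apply coe_evalRingHom add_comp C_comp X_comp
  eq_zero_of_comp_X_add_one_eq_self)

variable {R : Type*} [CommRing R] [IsDomain R] [CharZero R]

theorem rotheSum_X_eq (t y : R) (n : ℕ) :
    rotheSum (C t) n X (C y) = rotheB (C t) n (X + C y) := by
  induction n with
  | zero => simp [rotheSum]
  | succ n ih =>
    have ih_shift : rotheSum (C t) n (X + C t) (C y) = rotheB (C t) n (X + C t + C y) := by
      simpa [map_rotheSum, map_rotheB] using congrArg (compRingHom (X + C t)) ih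
    refine sub_eq_zero.mp (eq_zero_of_comp_X_add_one_eq_self ?_ ?_)
    · rw [← coe_compRingHom_apply, map_sub, map_rotheSum, map_rotheB]
      simp only [coe_compRingHom_apply, add_comp, C_comp, X_comp]
      rw [rotheSum_add_one, add_right_comm _ 1, rotheB_add_one, ih_shift, add_right_comm _ (C y)]
      ring
    · rw [← coe_evalRingHom, map_sub, map_rotheSum, map_rotheB]
      simp [rotheSum_zero_left]

theorem rotheSum_eq (t x y : R) (n : ℕ) : rotheSum t n x y = rotheB t n (x + y) := by
  simpa [map_rotheSum, map_rotheB] using congrArg (Polynomial.evalRingHom x) (rotheSum_X_eq t y n)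

end RotheIdentity

namespace PowerSeries

theorem eq_of_derivative_eq_mul {R : Type*} [CommRing R] [IsAddTorsionFree R] {F G h : R⟦X⟧}
    (hF : d⁄dX R F = F * h) (hG : d⁄dX R G = G * h) (h0 : constantCoeff F = constantCoeff G) :
    F = G := by
  have hD : d⁄dX R (F - G) = (F - G) * h := by rw [map_sub, hF, hG, sub_mul]
  suffices ∀ n, coeff n (F - G) = 0 from sub_eq_zero.mp (ext fun n => by simpa using this n)
  intro n
  induction n using Nat.strong_induction_on with
  | _ n ih =>
    cases n with
    | zero => simpa [sub_eq_zero] using h0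
    | succ n =>
      have h := congrArg (coeff n) hD
      rw [coeff_derivative, coeff_mul, sum_eq_zero fun p hp => ?_, ← Nat.cast_succ, mul_comm,
        ← nsmul_eq_mul] at h
      · exact (nsmul_eq_zero_iff_right n.succ_ne_zero).mp h
      · rw [ih p.1 (Nat.antidiagonal.fst_lt hp), zero_mul]

variable {R : Type*} [CommRing R] [Algebra ℚ R]

theorem expPS_eq_subst_exp {f : R⟦X⟧} (hf : constantCoeff f = 0) :
    expPS f = (exp R).subst f := by
  have hsubst : HasSubst f := HasSubst.of_constantCoeff_zero' hf
  ext n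
  rw [expPS, coeff_mk, coeff_subst' hsubst, finsum_eq_sum_of_support_subset (s := range (n + 1))]
  · simp [Algebra.smul_def]
  · intro d hd
    by_contra hnd
    have hlt : (n : ℕ∞) < d := by simpa using hnd
    refine hd ?_
    simp [coeff_of_lt_order n (hlt.trans_le (le_order_pow_of_constantCoeff_eq_zero d hf))]

theorem constantCoeff_expPS (f : R⟦X⟧) : constantCoeff (expPS f) = 1 := by
  rw [← coeff_zero_eq_constantCoeff_apply, expPS, coeff_mk]
  simp

theorem derivative_expPS {f : R⟦X⟧} (hf : constantCoeff f = 0) :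
    d⁄dX R (expPS f) = expPS f * d⁄dX R f := by
  rw [expPS_eq_subst_exp hf, derivative_subst (HasSubst.of_constantCoeff_zero' hf),
    derivative_exp]

def egf (a : ℕ → R) : R⟦X⟧ :=
  mk fun n => (n.factorial : ℚ)⁻¹ • a n

theorem coeff_egf (a : ℕ → R) (n : ℕ) : coeff n (egf a) = (n.factorial : ℚ)⁻¹ • a n :=
  coeff_mk _ _

theorem constantCoeff_egf (a : ℕ → R) : constantCoeff (egf a) = a 0 := by
  rw [← coeff_zero_eq_constantCoeff_apply, coeff_egf]
  simp

theorem derivative_egf (a : ℕ → R) : d⁄dX R (egf a) = egf fun n => a (n + 1) := by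
  ext n
  rw [coeff_derivative, coeff_egf, coeff_egf, smul_mul_assoc, ← Nat.cast_succ, mul_comm (a _),
    ← nsmul_eq_mul, ← Nat.cast_smul_eq_nsmul ℚ, smul_smul]
  congr 1
  rw [Nat.factorial_succ]
  push_cast
  field_simp

theorem C_mul_egf (x : R) (a : ℕ → R) : C x * egf a = egf fun n => x * a n := by
  ext n
  rw [coeff_C_mul, coeff_egf, coeff_egf, mul_smul_comm]

theorem egf_mul (a b : ℕ → R) :
    egf a * egf b = egf fun n => ∑ p ∈ antidiagonal n, (n.choose p.1 : R) * a p.1 * b p.2 := by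
  ext n
  rw [coeff_mul, coeff_egf, smul_sum]
  refine sum_congr rfl fun p hp => ?_
  obtain ⟨i, j⟩ := p
  obtain rfl : i + j = n := mem_antidiagonal.mp hp
  rw [coeff_egf, coeff_egf, smul_mul_smul_comm, mul_assoc, ← nsmul_eq_mul,
    ← Nat.cast_smul_eq_nsmul ℚ, smul_smul]
  congr 1
  have hchoose : ((i + j).choose j : ℚ) ≠ 0 := by
    exact_mod_cast (Nat.choose_pos (Nat.le_add_left j i)).ne'
  rw [Nat.choose_symm_add, ← Nat.add_choose_mul_factorial_mul_factorial i j]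
  push_cast
  field_simp

end PowerSeries

theorem expPS_C_mul_egf_rotheB {R : Type*} [CommRing R] [IsDomain R] [Algebra ℚ R] (t x : R) :
    expPS (C x * egf fun n => if n = 0 then 0 else rotheB t (n - 1) t) =
      egf fun n => rotheA t n x := by
  have : CharZero R := Algebra.charZero_of_charZero ℚ R
  set φ : R⟦X⟧ := egf fun n => if n = 0 then 0 else rotheB t (n - 1) t
  have hφ0 : constantCoeff (C x * φ) = 0 := by simp [φ, constantCoeff_egf]
  have hφ' : d⁄dX R (C x * φ) = C x * egf fun n => rotheB t n t := by
    simp [φ, derivative_egf]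
  refine eq_of_derivative_eq_mul (derivative_expPS hφ0) ?_ ?_
  · rw [derivative_egf, hφ', C_mul_egf, egf_mul]
    congr 1
    funext n
    rw [rotheA_succ, ← rotheSum_eq, rotheSum, mul_sum]
    exact sum_congr rfl fun p _ => by ring
  · rw [constantCoeff_expPS, constantCoeff_egf, rotheA_zero]

theorem phiθ_eq_egf : phiθ =
    egf fun n => if n = 0 then 0 else rotheB (MvPolynomial.X 0) (n - 1) (MvPolynomial.X 0) := by
  ext n : 1
  rw [phiθ, coeff_mk, coeff_egf]
  cases n with
  | zero => simp
  | succ n =>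
    simp only [Nat.add_one_ne_zero, if_false, Nat.add_sub_cancel, rotheB, MvPolynomial.C_mul',
      one_div]
    congr 1
    refine prod_congr rfl fun a _ => ?_
    push_cast
    ring

theorem exp_lambda_phi :
    expPS (PowerSeries.C (R := RTL) (MvPolynomial.X 1) * phiθ) =
      1 + PowerSeries.C (R := RTL) (MvPolynomial.X 1) *
        PowerSeries.mk (fun n =>
          if n = 0 then 0 else
            MvPolynomial.C ((1 : ℚ) / n.factorial) *
              ∏ a ∈ Finset.range (n - 1),
                (MvPolynomial.X 1 + (n : RTL) * MvPolynomial.X 0 - ((a : RTL) + 1))) := by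
  rw [phiθ_eq_egf, expPS_C_mul_egf_rotheB]
  ext n : 1
  rw [coeff_egf, map_add, coeff_one, coeff_C_mul, coeff_mk]
  cases n with
  | zero => simp
  | succ n =>
    simp only [Nat.add_one_ne_zero, if_false, Nat.add_sub_cancel, rotheA_succ, rotheB,
      MvPolynomial.C_mul', one_div, zero_add, mul_smul_comm]
    congr 2
    refine prod_congr rfl fun a _ => ?_
    push_cast
    ring
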